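/- Let U be an open subset of ℝ^K. Let (μ_n)_n be a sequence of Borel probability measures on U narrowly converging to μ, and let (v_n)_n be a sequence of vector fields with v_n ∈ L²(U, μ_n; ℝ^K) satisfying sup_n ‖v_n‖_{L²(U,μ_n;ℝ^K)} < ∞. Then there exists a vector field v ∈ L²(U, μ; ℝ^K) such that, along a subsequence, ∫_U ϕ · v_n dμ_n → ∫_U ϕ · v dμ for every ϕ ∈ C_c^∞(U; ℝ^K), and liminf_{n→∞} ‖v_n‖_{L²(U,μ_n;ℝ^K)} ≥ ‖v‖_{L²(U,μ;ℝ^K)}. -/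

import Mathlib

open MeasureTheory Filter Topology Real Set
open scoped ENNReal NNReal RealInnerProductSpace

noncomputable section

/-- The plane `ℝ²`. -/
abbrev E2 : Type := EuclideanSpace ℝ (Fin 2)

/-- The standard basis vectors of `ℝ²`. -/
def e2 (i : Fin 2) : E2 := EuclideanSpace.single i 1

/-- `v` is the distributional (weak) gradient of `f` on `ℝ²`. -/
def HasWeakGrad (f : E2 → ℝ) (v : E2 → E2) : Prop :=
  LocallyIntegrable f volume ∧ LocallyIntegrable v volume ∧
  ∀ η : E2 → ℝ, ContDiff ℝ (⊤ : ℕ∞) η → HasCompactSupport η → ∀ i : Fin 2,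
    ∫ x, f x * fderiv ℝ η x (e2 i) = - ∫ x, η x * v x i

/-- The Laplacian of a smooth function on `ℝ²`. -/
def lapl (η : E2 → ℝ) (x : E2) : ℝ := ∑ i : Fin 2, iteratedFDeriv ℝ 2 η x (fun _ => e2 i)

/-- `L` is the distributional Laplacian of `f` on `ℝ²`. -/
def HasWeakLapl (f L : E2 → ℝ) : Prop :=
  LocallyIntegrable f volume ∧ LocallyIntegrable L volume ∧
  ∀ η : E2 → ℝ, ContDiff ℝ (⊤ : ℕ∞) η → HasCompactSupport η →
    ∫ x, f x * lapl η x = ∫ x, L x * η x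

/-- `φ ∈ H¹(ℝ²)` with (weak) gradient `g`. -/
structure MemH1 (φ : E2 → ℝ) (g : E2 → E2) : Prop where
  memL2 : MemLp φ 2 (volume : Measure E2)
  grad_memL2 : MemLp g 2 (volume : Measure E2)
  weak : HasWeakGrad φ g

/-- `ρ` belongs to `𝒦`: a probability density on `ℝ²` with finite second moment and
finite entropy. -/
structure MemK (ρ : E2 → ℝ) : Prop where
  nonneg : ∀ x, 0 ≤ ρ x
  integrable : Integrable ρ (volume : Measure E2)
  mass : ∫ x, ρ x = 1
  moment : Integrable (fun x : E2 => ‖x‖ ^ 2 * ρ x) (volume : Measure E2)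
  entropy : Integrable (fun x => ρ x * Real.log (ρ x)) (volume : Measure E2)

/-- The measure with density `ρ` w.r.t. Lebesgue measure. -/
def densMeasure (ρ : E2 → ℝ) : Measure E2 := volume.withDensity fun x => ENNReal.ofReal (ρ x)

/-- `γ` is a coupling of `μ` and `ν`. -/
def IsCoupling (γ : Measure (E2 × E2)) (μ ν : Measure E2) : Prop :=
  γ.map Prod.fst = μ ∧ γ.map Prod.snd = ν

/-- The squared quadratic Kantorovich-Rubinstein-Wasserstein distance `d_W²(μ,ν)`. -/
def W2sq (μ ν : Measure E2) : ℝ :=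
  (⨅ γ ∈ {γ : Measure (E2 × E2) | IsCoupling γ μ ν},
    ∫⁻ p, (‖p.1 - p.2‖₊ : ℝ≥0∞) ^ 2 ∂γ).toReal

/-- The function `H(x) = 1/(π(1+|x|²)²)`. -/
def Hfun (x : E2) : ℝ := 1 / (π * (1 + ‖x‖ ^ 2) ^ 2)

/-- The integrand of the free energy `𝓔[ρ,φ]`, where `g` is the weak gradient of `φ`. -/
def eInt (χ α : ℝ) (ρ φ : E2 → ℝ) (g : E2 → E2) (x : E2) : ℝ :=
  (1 / χ) * ρ x * Real.log (ρ x) - ρ x * φ x + (1 / 2) * ‖g x‖ ^ 2 + (α / 2) * φ x ^ 2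

/-- The free energy `𝓔[ρ,φ]` (real-valued, for integrable data). -/
def freeEnergyR (χ α : ℝ) (ρ φ : E2 → ℝ) (g : E2 → E2) : ℝ := ∫ x, eInt χ α ρ φ g x

/-- The free energy `𝓔[ρ,φ]` with values in the extended reals. -/
def energyE (χ α : ℝ) (ρ φ : E2 → ℝ) (g : E2 → E2) : EReal :=
  ((∫⁻ x, ENNReal.ofReal (eInt χ α ρ φ g x) : ℝ≥0∞) : EReal)
  - ((∫⁻ x, ENNReal.ofReal (-(eInt χ α ρ φ g x)) : ℝ≥0∞) : EReal)

/-- One step functional `𝓕_{h,n}` of the minimising scheme, relative to the previous step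
`(ρp,φp)`; extended-real-valued. -/
def Fh (χ α τ h : ℝ) (ρp φp ρ φ : E2 → ℝ) (g : E2 → E2) : EReal :=
  (((1 / (2 * h)) * ((1 / χ) * W2sq (densMeasure ρ) (densMeasure ρp)
      + τ * ∫ x, (φ x - φp x) ^ 2) : ℝ) : EReal) + energyE χ α ρ φ g

/-- `(ρs, φs)` (with weak gradients `gs` of `φs`) is a sequence produced by the
minimising (JKO-type) scheme with time step `h` from `(ρ0, φ0)`. -/
structure IsScheme (χ α τ h : ℝ) (ρ0 φ0 : E2 → ℝ)
    (ρs φs : ℕ → E2 → ℝ) (gs : ℕ → E2 → E2) : Prop where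
  init_ρ : ρs 0 = ρ0
  init_φ : φs 0 = φ0
  memK : ∀ n, MemK (ρs n)
  memH1 : ∀ n, MemH1 (φs n) (gs n)
  min : ∀ (n : ℕ) (ρ φ : E2 → ℝ) (g : E2 → E2), MemK ρ → MemH1 φ g →
    Fh χ α τ h (ρs n) (φs n) (ρs (n + 1)) (φs (n + 1)) (gs (n + 1))
      ≤ Fh χ α τ h (ρs n) (φs n) ρ φ g

/-- index of the piecewise constant interpolant: `t ∈ ((n-1)h, nh]` corresponds to `n`. -/
def idx (h t : ℝ) : ℕ := ⌈t / h⌉₊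

/-- The functional `𝓥[ρ,φ]`, `g` being the weak gradient of `φ`. -/
def Vfun (χ α τ : ℝ) (ρ φ : E2 → ℝ) (g : E2 → E2) : ℝ :=
  (1 / χ) * (∫ x, ρ x * Real.log (ρ x)) + (τ / 2) * ∫ x, (‖g x‖ ^ 2 + α * φ x ^ 2)

/-- Spatial gradient of a space-time test function. -/
def spatialGrad (ξ : ℝ × E2 → ℝ) (p : ℝ × E2) : E2 :=
  (WithLp.equiv 2 (Fin 2 → ℝ)).symm fun i => fderiv ℝ ξ p ((0 : ℝ), e2 i)

set_option linter.unusedSectionVars false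
set_option maxHeartbeats 1000000

section AuxLemmas

variable {α : Type*} [MeasurableSpace α] {ν : Measure α}
variable {E : Type*} [NormedAddCommGroup E] [InnerProductSpace ℝ E]

omit [InnerProductSpace ℝ E] in
lemma aux_eLpNorm_two (f : α → E) :
    eLpNorm f 2 ν = (∫⁻ x, (‖f x‖₊ : ℝ≥0∞) ^ 2 ∂ν) ^ (1/2 : ℝ) := by
  rw [eLpNorm_eq_lintegral_rpow_enorm_toReal two_ne_zero ENNReal.ofNat_ne_top]
  congr 1
  refine lintegral_congr fun x => ?_
  rw [enorm_eq_nnnorm, ENNReal.toReal_ofNat, ← ENNReal.rpow_natCast]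
  norm_num

omit [InnerProductSpace ℝ E] in
lemma aux_memℒp_two {f : α → E} (hm : AEStronglyMeasurable f ν)
    (hfin : ∫⁻ x, (‖f x‖₊ : ℝ≥0∞) ^ 2 ∂ν ≠ ∞) : MemLp f 2 ν := by
  refine ⟨hm, ?_⟩
  rw [aux_eLpNorm_two]
  exact ENNReal.rpow_lt_top_of_nonneg (by norm_num) hfin

omit [InnerProductSpace ℝ E] in
lemma aux_lintegral_ne_top {f : α → E} (hf : MemLp f 2 ν) :
    ∫⁻ x, (‖f x‖₊ : ℝ≥0∞) ^ 2 ∂ν ≠ ∞ := by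
  intro h
  have := hf.2
  rw [aux_eLpNorm_two, h] at this
  simp [ENNReal.top_rpow_of_pos (by norm_num : (0:ℝ) < 1/2)] at this

omit [InnerProductSpace ℝ E] in
lemma aux_integral_sq {f : α → E} (hf : AEStronglyMeasurable f ν) :
    ∫ x, ‖f x‖ ^ 2 ∂ν = (∫⁻ x, (‖f x‖₊ : ℝ≥0∞) ^ 2 ∂ν).toReal := by
  have hmeas : AEStronglyMeasurable (fun x => ‖f x‖ ^ 2) ν := by
    exact hf.norm.pow 2
  rw [integral_eq_lintegral_of_nonneg_ae (Eventually.of_forall fun x => sq_nonneg _) hmeas]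
  congr 1
  refine lintegral_congr fun x => ?_
  rw [ENNReal.ofReal_pow (norm_nonneg _), ofReal_norm, enorm_eq_nnnorm]

lemma aux_norm_sq_Lp (f : Lp E 2 ν) : ‖f‖ ^ 2 = ∫ x, ‖f x‖ ^ 2 ∂ν := by
  rw [← real_inner_self_eq_norm_sq f, L2.inner_def]
  exact integral_congr_ae (Eventually.of_forall fun x => real_inner_self_eq_norm_sq _)

lemma aux_norm_Lp (f : Lp E 2 ν) : ‖f‖ = Real.sqrt (∫ x, ‖f x‖ ^ 2 ∂ν) := by
  rw [← aux_norm_sq_Lp, Real.sqrt_sq (norm_nonneg _)]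

lemma aux_norm_toLp {f : α → E} (hf : MemLp f 2 ν) :
    ‖hf.toLp f‖ = Real.sqrt (∫ x, ‖f x‖ ^ 2 ∂ν) := by
  rw [aux_norm_Lp]
  congr 1
  exact integral_congr_ae (hf.coeFn_toLp.mono fun x hx => by simp only [hx])

lemma aux_cs {f g : α → E} (hf : MemLp f 2 ν) (hg : MemLp g 2 ν) :
    |∫ x, ⟪f x, g x⟫ ∂ν| ≤
      Real.sqrt (∫ x, ‖f x‖ ^ 2 ∂ν) * Real.sqrt (∫ x, ‖g x‖ ^ 2 ∂ν) := by
  have h1 : ∫ x, ⟪f x, g x⟫ ∂ν = ⟪hf.toLp f, hg.toLp g⟫ := by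
    rw [L2.inner_def]
    refine integral_congr_ae ?_
    filter_upwards [hf.coeFn_toLp, hg.coeFn_toLp] with x h h'
    rw [h, h']
  rw [h1, ← aux_norm_toLp hf, ← aux_norm_toLp hg]
  exact abs_real_inner_le_norm _ _

lemma aux_integrable_inner {f g : α → E} (hf : MemLp f 2 ν) (hg : MemLp g 2 ν) :
    Integrable (fun x => ⟪f x, g x⟫) ν := by
  have := L2.integrable_inner (𝕜 := ℝ) (hf.toLp f) (hg.toLp g)
  refine this.congr ?_
  filter_upwards [hf.coeFn_toLp, hg.coeFn_toLp] with x h h'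
  rw [h, h']

lemma aux_subseq_liminf (b : ℕ → ℝ) {B : ℝ} (h0 : ∀ n, 0 ≤ b n) (hB : ∀ n, b n ≤ B) :
    ∃ τ : ℕ → ℕ, StrictMono τ ∧
      Tendsto (fun i => b (τ i)) atTop (𝓝 (atTop.liminf b)) := by
  set r := atTop.liminf b with hr
  have hbdd : IsBoundedUnder (· ≥ ·) atTop b := isBoundedUnder_of ⟨0, h0⟩
  have hbdd' : IsBoundedUnder (· ≤ ·) atTop b := isBoundedUnder_of ⟨B, hB⟩
  have hcob : IsCoboundedUnder (· ≥ ·) atTop b := hbdd'.isCoboundedUnder_ge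
  have hfreq : ∀ n : ℕ, ∃ᶠ k in atTop, |b k - r| < 1 / (n + 1) := by
    intro n
    have hpos : (0:ℝ) < 1 / (n + 1) := by positivity
    have h1 : ∃ᶠ k in atTop, b k < r + 1 / (n + 1) :=
      frequently_lt_of_liminf_lt hcob (by linarith)
    have h2 : ∀ᶠ k in atTop, r - 1 / (n + 1) < b k :=
      eventually_lt_of_lt_liminf (by linarith) hbdd
    refine (h1.and_eventually h2).mono ?_
    rintro k ⟨hk1, hk2⟩
    rw [abs_lt]; constructor <;> linarith
  obtain ⟨τ, hτ, hτ2⟩ := extraction_forall_of_frequently hfreq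
  refine ⟨τ, hτ, Metric.tendsto_atTop.mpr fun ε hε => ?_⟩
  obtain ⟨N, hN⟩ := exists_nat_one_div_lt hε
  refine ⟨N, fun i hi => ?_⟩
  rw [Real.dist_eq]
  calc |b (τ i) - r| < 1 / (i + 1) := hτ2 i
    _ ≤ 1 / (N + 1) := by
        apply one_div_le_one_div_of_le (by positivity)
        have : (N:ℝ) ≤ i := Nat.cast_le.mpr hi
        linarith
    _ < ε := hN

end AuxLemmas

/-- **Compactness of vector fields** (cf. AGS, Theorem 5.4.4): if probability measures
`μ_n` supported in an open set `U ⊆ ℝ^K` converge narrowly to `μ` and vector fields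
`v_n ∈ L²(U, μ_n; ℝ^K)` have uniformly bounded norms, then there is `v ∈ L²(U, μ; ℝ^K)`
such that, along a subsequence, `∫ ϕ·v_n dμ_n → ∫ ϕ·v dμ` for all test vector fields `ϕ`
and the `L²` norms are lower semicontinuous. -/
theorem vector_field_compactness (K : ℕ) (U : Set (EuclideanSpace ℝ (Fin K)))
    (hU : IsOpen U)
    (μs : ℕ → Measure (EuclideanSpace ℝ (Fin K))) (μ : Measure (EuclideanSpace ℝ (Fin K)))
    (hprob : ∀ n, IsProbabilityMeasure (μs n)) (hμprob : IsProbabilityMeasure μ)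
    (hsupp : ∀ n, μs n Uᶜ = 0) (hμsupp : μ Uᶜ = 0)
    (hnarrow : ∀ ϕ : EuclideanSpace ℝ (Fin K) → ℝ, Continuous ϕ →
      (∃ M : ℝ, ∀ x, |ϕ x| ≤ M) →
      Tendsto (fun n => ∫ x, ϕ x ∂(μs n)) atTop (𝓝 (∫ x, ϕ x ∂μ)))
    (vs : ℕ → EuclideanSpace ℝ (Fin K) → EuclideanSpace ℝ (Fin K))
    (hmeas : ∀ n, AEStronglyMeasurable (vs n) (μs n))
    (hbdd : ∃ C : ℝ≥0∞, C ≠ ⊤ ∧ ∀ n, ∫⁻ x, (‖vs n x‖₊ : ℝ≥0∞) ^ 2 ∂(μs n) ≤ C) :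
    ∃ v : EuclideanSpace ℝ (Fin K) → EuclideanSpace ℝ (Fin K),
      MemLp v 2 μ ∧
      ∃ σ : ℕ → ℕ, StrictMono σ ∧
        (∀ ϕ : EuclideanSpace ℝ (Fin K) → EuclideanSpace ℝ (Fin K),
          ContDiff ℝ (⊤ : ℕ∞) ϕ → HasCompactSupport ϕ → tsupport ϕ ⊆ U →
          Tendsto (fun j => ∫ x, ⟪ϕ x, vs (σ j) x⟫ ∂(μs (σ j))) atTop
            (𝓝 (∫ x, ⟪ϕ x, v x⟫ ∂μ))) ∧
        ∫⁻ x, (‖v x‖₊ : ℝ≥0∞) ^ 2 ∂μ ≤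
          atTop.liminf fun j => ∫⁻ x, (‖vs (σ j) x‖₊ : ℝ≥0∞) ^ 2 ∂(μs (σ j)) := by
  classical
  haveI : Fact ((2:ℝ≥0∞) ≠ ∞) := ⟨by norm_num⟩
  obtain ⟨C, hCne, hC⟩ := hbdd
  set N : ℕ → ℝ≥0∞ := fun n => ∫⁻ x, (‖vs n x‖₊ : ℝ≥0∞) ^ 2 ∂(μs n) with hN
  have hvmem : ∀ n, MemLp (vs n) 2 (μs n) := fun n =>
    aux_memℒp_two (hmeas n) (ne_top_of_le_ne_top hCne (hC n))
  have hNC : ∀ n, (N n).toReal ≤ C.toReal := fun n => ENNReal.toReal_mono hCne (hC n)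
  set ℓ : ℕ → ((EuclideanSpace ℝ (Fin K)) → (EuclideanSpace ℝ (Fin K))) → ℝ := fun n ϕ => ∫ x, ⟪ϕ x, vs n x⟫ ∂(μs n) with hℓ
  -- the submodule of test vector fields
  set Tsub : Submodule ℝ ((EuclideanSpace ℝ (Fin K)) → (EuclideanSpace ℝ (Fin K))) :=
    { carrier := {ϕ | ContDiff ℝ (⊤ : ℕ∞) ϕ ∧ HasCompactSupport ϕ ∧ tsupport ϕ ⊆ U}
      add_mem' := fun {f g} hf hg =>
        ⟨hf.1.add hg.1, hf.2.1.add hg.2.1, (tsupport_add f g).trans (union_subset hf.2.2 hg.2.2)⟩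
      zero_mem' := ⟨contDiff_const, HasCompactSupport.zero, by
        simp [tsupport, Function.support_zero]⟩
      smul_mem' := fun c {f} hf => ⟨hf.1.const_smul c, hf.2.1.of_isClosed_subset (isClosed_tsupport _) (tsupport_smul_subset_right (fun _ => c) f),
        (tsupport_smul_subset_right (fun _ => c) f).trans hf.2.2⟩ } with hTsub
  have hTmem : ∀ (ϕ : Tsub) (ν : Measure (EuclideanSpace ℝ (Fin K))), IsProbabilityMeasure ν → MemLp ϕ.1 2 ν := by
    intro ϕ ν hν
    haveI := hν
    obtain ⟨B, hB⟩ := ϕ.2.2.1.exists_bound_of_continuous ϕ.2.1.continuous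
    exact MemLp.of_bound ϕ.2.1.continuous.aestronglyMeasurable B (Eventually.of_forall hB)
  -- Cauchy-Schwarz type estimates
  have hest : ∀ (n : ℕ) (ϕ : Tsub),
      |ℓ n ϕ.1| ≤ Real.sqrt (∫ x, ‖ϕ.1 x‖ ^ 2 ∂(μs n)) * Real.sqrt (N n).toReal := by
    intro n ϕ
    have h := aux_cs (hTmem ϕ (μs n) (hprob n)) (hvmem n)
    rwa [aux_integral_sq (hmeas n)] at h
  have hestC : ∀ (n : ℕ) (ϕ : Tsub),
      |ℓ n ϕ.1| ≤ Real.sqrt (∫ x, ‖ϕ.1 x‖ ^ 2 ∂(μs n)) * Real.sqrt C.toReal := by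
    intro n ϕ
    refine (hest n ϕ).trans ?_
    exact mul_le_mul_of_nonneg_left (Real.sqrt_le_sqrt (hNC n)) (Real.sqrt_nonneg _)
  -- narrow convergence of the squared norms
  have hsq : ∀ (ϕ : Tsub), Tendsto (fun n => ∫ x, ‖ϕ.1 x‖ ^ 2 ∂(μs n)) atTop
      (𝓝 (∫ x, ‖ϕ.1 x‖ ^ 2 ∂μ)) := by
    intro ϕ
    obtain ⟨B, hB⟩ := ϕ.2.2.1.exists_bound_of_continuous ϕ.2.1.continuous
    refine hnarrow _ (ϕ.2.1.continuous.norm.pow 2) ⟨B ^ 2, fun x => ?_⟩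
    rw [abs_of_nonneg (sq_nonneg _)]
    exact pow_le_pow_left₀ (norm_nonneg _) (hB x) 2
  have hintbd : ∀ (ϕ : Tsub) (B : ℝ), (∀ x, ‖ϕ.1 x‖ ≤ B) → ∀ n,
      ∫ x, ‖ϕ.1 x‖ ^ 2 ∂(μs n) ≤ B ^ 2 := by
    intro ϕ B hB n
    haveI := hprob n
    calc ∫ x, ‖ϕ.1 x‖ ^ 2 ∂(μs n) ≤ ∫ _x, B ^ 2 ∂(μs n) := by
          refine integral_mono ?_ (integrable_const _)
            (fun x => pow_le_pow_left₀ (norm_nonneg _) (hB x) 2)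
          exact (memLp_two_iff_integrable_sq_norm
            ϕ.2.1.continuous.aestronglyMeasurable).mp (hTmem ϕ (μs n) (hprob n))
      _ = B ^ 2 := by simp
  -- instances for separability of L²(μ)
  haveI : MeasurableSpace.CountablyGenerated (EuclideanSpace ℝ (Fin K)) := by infer_instance
  haveI : MeasureTheory.IsSeparable μ := by infer_instance
  haveI : SecondCountableTopology (Lp (EuclideanSpace ℝ (Fin K)) 2 μ) := by infer_instance
  -- map to L²(μ)
  set qmap : Tsub →ₗ[ℝ] Lp (EuclideanSpace ℝ (Fin K)) 2 μ :=
    { toFun := fun ϕ => (hTmem ϕ μ hμprob).toLp ϕ.1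
      map_add' := fun f g => MemLp.toLp_add (hTmem f μ hμprob) (hTmem g μ hμprob)
      map_smul' := fun c f => MemLp.toLp_const_smul c (hTmem f μ hμprob) } with hqmap
  have hqnorm : ∀ ϕ : Tsub, ‖qmap ϕ‖ = Real.sqrt (∫ x, ‖ϕ.1 x‖ ^ 2 ∂μ) := fun ϕ =>
    aux_norm_toLp (hTmem ϕ μ hμprob)
  -- countable family dense in the image of the test fields
  obtain ⟨ψ, hψdense⟩ : ∃ ψ : ℕ → Tsub, ∀ (ϕ : Tsub) (ε : ℝ), 0 < ε →
      ∃ k, ‖qmap ϕ - qmap (ψ k)‖ < ε := by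
    set s : Set (Lp (EuclideanSpace ℝ (Fin K)) 2 μ) := Set.range (fun ϕ : Tsub => qmap ϕ) with hs
    haveI : Nonempty ↥s := ⟨⟨qmap 0, ⟨0, rfl⟩⟩⟩
    haveI : TopologicalSpace.SeparableSpace ↥s := TopologicalSpace.SecondCountableTopology.to_separableSpace
    obtain ⟨D₀, hD₀c, hD₀d⟩ := TopologicalSpace.exists_countable_dense ↥s
    have hne : D₀.Nonempty := hD₀d.nonempty
    obtain ⟨e, he⟩ := hD₀c.exists_eq_range hne
    choose ψ hψ using fun k => (e k).2
    refine ⟨ψ, fun ϕ ε hε => ?_⟩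
    have hx : (⟨qmap ϕ, ⟨ϕ, rfl⟩⟩ : ↥s) ∈ closure D₀ := hD₀d _
    obtain ⟨d, hdD, hdist⟩ := Metric.mem_closure_iff.mp hx ε hε
    rw [he] at hdD
    obtain ⟨k, rfl⟩ := hdD
    refine ⟨k, ?_⟩
    have hψk : qmap (ψ k) = ((e k : ↥s) : Lp (EuclideanSpace ℝ (Fin K)) 2 μ) := hψ k
    have hd : dist (qmap ϕ) (qmap (ψ k)) < ε := by
      rw [hψk]
      simpa [Subtype.dist_eq] using hdist
    rwa [dist_eq_norm] at hd
  -- uniform bounds for the countable family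
  choose Bs hBs using fun k => (ψ k).2.2.1.exists_bound_of_continuous (ψ k).2.1.continuous
  set R : ℕ → ℝ := fun k => Real.sqrt (Bs k ^ 2) * Real.sqrt C.toReal with hR
  have hRmem : ∀ n k, ℓ n (ψ k).1 ∈ Icc (-(R k)) (R k) := by
    intro n k
    rw [Set.mem_Icc, ← abs_le]
    refine (hest n (ψ k)).trans ?_
    exact mul_le_mul (Real.sqrt_le_sqrt (hintbd (ψ k) (Bs k) (hBs k) n))
      (Real.sqrt_le_sqrt (hNC n)) (Real.sqrt_nonneg _) (Real.sqrt_nonneg _)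
  -- diagonal extraction
  have hScpt : IsCompact (Set.pi (univ : Set ℕ) fun k => Icc (-(R k)) (R k)) :=
    isCompact_univ_pi fun k => isCompact_Icc
  obtain ⟨a, -, σ, hσ, hσtend⟩ :=
    hScpt.isSeqCompact (x := fun n k => ℓ n (ψ k).1)
      (fun n => by
        rw [Set.mem_univ_pi]
        intro k
        exact hRmem n k)
  have hcoord : ∀ k, Tendsto (fun j => ℓ (σ j) (ψ k).1) atTop (𝓝 (a k)) := by
    intro k
    exact tendsto_pi_nhds.mp hσtend k
  -- linearity of ℓ in the test field
  have hℓsub : ∀ (n : ℕ) (ϕ χ : Tsub), ℓ n (ϕ - χ : Tsub).1 = ℓ n ϕ.1 - ℓ n χ.1 := by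
    intro n ϕ χ
    have h1 := aux_integrable_inner (hTmem ϕ (μs n) (hprob n)) (hvmem n)
    have h2 := aux_integrable_inner (hTmem χ (μs n) (hprob n)) (hvmem n)
    show ∫ x, ⟪(ϕ - χ : Tsub).1 x, vs n x⟫ ∂(μs n) = _
    have heq : ∀ x, ⟪(ϕ - χ : Tsub).1 x, vs n x⟫ = ⟪ϕ.1 x, vs n x⟫ - ⟪χ.1 x, vs n x⟫ := by
      intro x
      rw [Submodule.coe_sub, Pi.sub_apply, inner_sub_left]
    rw [integral_congr_ae (Eventually.of_forall heq), integral_sub h1 h2]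
  have hℓadd : ∀ (n : ℕ) (ϕ χ : Tsub), ℓ n (ϕ + χ : Tsub).1 = ℓ n ϕ.1 + ℓ n χ.1 := by
    intro n ϕ χ
    have h1 := aux_integrable_inner (hTmem ϕ (μs n) (hprob n)) (hvmem n)
    have h2 := aux_integrable_inner (hTmem χ (μs n) (hprob n)) (hvmem n)
    show ∫ x, ⟪(ϕ + χ : Tsub).1 x, vs n x⟫ ∂(μs n) = _
    have heq : ∀ x, ⟪(ϕ + χ : Tsub).1 x, vs n x⟫ = ⟪ϕ.1 x, vs n x⟫ + ⟪χ.1 x, vs n x⟫ := by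
      intro x
      rw [Submodule.coe_add, Pi.add_apply, inner_add_left]
    rw [integral_congr_ae (Eventually.of_forall heq), integral_add h1 h2]
  have hℓsmul : ∀ (n : ℕ) (c : ℝ) (ϕ : Tsub), ℓ n (c • ϕ : Tsub).1 = c * ℓ n ϕ.1 := by
    intro n c ϕ
    show ∫ x, ⟪(c • ϕ : Tsub).1 x, vs n x⟫ ∂(μs n) = _
    have heq : ∀ x, ⟪(c • ϕ : Tsub).1 x, vs n x⟫ = c * ⟪ϕ.1 x, vs n x⟫ := by
      intro x
      rw [Submodule.coe_smul, Pi.smul_apply, real_inner_smul_left]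
    rw [integral_congr_ae (Eventually.of_forall heq)]
    simp_rw [← smul_eq_mul]
    rw [integral_smul]
  -- convergence along σ for every test field
  have hconv : ∀ ϕ : Tsub, ∃ L, Tendsto (fun j => ℓ (σ j) ϕ.1) atTop (𝓝 L) := by
    intro ϕ
    apply cauchySeq_tendsto_of_complete
    rw [Metric.cauchySeq_iff]
    intro ε hε
    have hC1 : (0:ℝ) < Real.sqrt C.toReal + 1 := by positivity
    set δ := ε / (4 * (Real.sqrt C.toReal + 1)) with hδ
    have hδpos : 0 < δ := by positivity
    obtain ⟨k, hk⟩ := hψdense ϕ δ hδpos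
    have hμsq : ∫ x, ‖(ϕ - ψ k : Tsub).1 x‖ ^ 2 ∂μ < δ ^ 2 := by
      have h0 : ‖qmap (ϕ - ψ k)‖ < δ := by rw [map_sub]; exact hk
      have h3 : ∫ x, ‖(ϕ - ψ k : Tsub).1 x‖ ^ 2 ∂μ = ‖qmap (ϕ - ψ k)‖ ^ 2 := by
        rw [hqnorm, Real.sq_sqrt (integral_nonneg fun x => sq_nonneg _)]
      rw [h3]
      exact pow_lt_pow_left₀ h0 (norm_nonneg _) two_ne_zero
    have hev : ∀ᶠ n in atTop, ∫ x, ‖(ϕ - ψ k : Tsub).1 x‖ ^ 2 ∂(μs n) < δ ^ 2 :=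
      (hsq (ϕ - ψ k)).eventually_lt_const hμsq
    rw [eventually_atTop] at hev
    obtain ⟨N₁, hN₁⟩ := hev
    have hcauchyk : CauchySeq (fun j => ℓ (σ j) (ψ k).1) := (hcoord k).cauchySeq
    rw [Metric.cauchySeq_iff] at hcauchyk
    obtain ⟨N₂, hN₂⟩ := hcauchyk (ε/2) (by positivity)
    refine ⟨max N₁ N₂, fun m hm n hn => ?_⟩
    have key : ∀ j, N₁ ≤ j → |ℓ (σ j) ϕ.1 - ℓ (σ j) (ψ k).1| ≤ ε / 4 := by
      intro j hj
      have hσj : N₁ ≤ σ j := hj.trans hσ.le_apply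
      rw [← hℓsub]
      refine (hestC _ _).trans ?_
      have h2 : Real.sqrt (∫ x, ‖(ϕ - ψ k : Tsub).1 x‖ ^ 2 ∂(μs (σ j))) ≤ δ := by
        refine (Real.sqrt_le_sqrt (hN₁ _ hσj).le).trans ?_
        rw [Real.sqrt_sq hδpos.le]
      have h4 : Real.sqrt C.toReal ≤ Real.sqrt C.toReal + 1 := by linarith
      calc Real.sqrt (∫ x, ‖(ϕ - ψ k : Tsub).1 x‖ ^ 2 ∂(μs (σ j))) * Real.sqrt C.toReal
          ≤ δ * (Real.sqrt C.toReal + 1) :=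
            mul_le_mul h2 h4 (Real.sqrt_nonneg _) hδpos.le
        _ = ε / 4 := by
            rw [hδ]
            field_simp
    have h5 := key m (le_trans (le_max_left _ _) hm)
    have h6 := key n (le_trans (le_max_left _ _) hn)
    have h7 := hN₂ m (le_trans (le_max_right _ _) hm) n (le_trans (le_max_right _ _) hn)
    rw [Real.dist_eq] at h7 ⊢
    have t1 := abs_sub_le (ℓ (σ m) ϕ.1) (ℓ (σ m) (ψ k).1) (ℓ (σ n) ϕ.1)
    have t2 := abs_sub_le (ℓ (σ m) (ψ k).1) (ℓ (σ n) (ψ k).1) (ℓ (σ n) ϕ.1)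
    have h8 : |ℓ (σ n) (ψ k).1 - ℓ (σ n) ϕ.1| = |ℓ (σ n) ϕ.1 - ℓ (σ n) (ψ k).1| := abs_sub_comm _ _
    linarith
  choose Lv hLv using hconv
  -- subsequence achieving the liminf of the norms
  set b : ℕ → ℝ := fun j => (N (σ j)).toReal with hb
  obtain ⟨τ, hτ, hτtend⟩ := aux_subseq_liminf b (fun j => ENNReal.toReal_nonneg)
    (fun j => hNC (σ j))
  set r := atTop.liminf b with hrdef
  have hr0 : 0 ≤ r :=
    le_of_tendsto_of_tendsto' tendsto_const_nhds hτtend fun i => ENNReal.toReal_nonneg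
  -- the limiting functional is bounded
  have hLb : ∀ ϕ : Tsub, |Lv ϕ| ≤ Real.sqrt r * ‖qmap ϕ‖ := by
    intro ϕ
    have h1 : Tendsto (fun i => |ℓ (σ (τ i)) ϕ.1|) atTop (𝓝 |Lv ϕ|) :=
      ((hLv ϕ).comp hτ.tendsto_atTop).abs
    have hστ : StrictMono (fun i => σ (τ i)) := hσ.comp hτ
    have h2 : Tendsto (fun i => Real.sqrt (∫ x, ‖ϕ.1 x‖ ^ 2 ∂(μs (σ (τ i)))) *
        Real.sqrt (b (τ i))) atTop
        (𝓝 (Real.sqrt (∫ x, ‖ϕ.1 x‖ ^ 2 ∂μ) * Real.sqrt r)) :=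
      (((hsq ϕ).comp hστ.tendsto_atTop).sqrt).mul hτtend.sqrt
    have h3 : ∀ i, |ℓ (σ (τ i)) ϕ.1| ≤
        Real.sqrt (∫ x, ‖ϕ.1 x‖ ^ 2 ∂(μs (σ (τ i)))) * Real.sqrt (b (τ i)) := fun i =>
      hest _ _
    have h4 := le_of_tendsto_of_tendsto' h1 h2 h3
    rw [hqnorm ϕ]
    linarith [h4]
  -- assemble the linear functional on the range of qmap
  set Lfun : Tsub →ₗ[ℝ] ℝ :=
    { toFun := Lv
      map_add' := fun f g => by
        refine tendsto_nhds_unique (hLv (f + g)) ?_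
        have := (hLv f).add (hLv g)
        refine this.congr fun j => ?_
        rw [← hℓadd]
      map_smul' := fun c f => by
        refine tendsto_nhds_unique (hLv (c • f)) ?_
        have := (hLv f).const_mul c
        refine this.congr fun j => ?_
        rw [← hℓsmul] } with hLfun
  have hbound : ∀ ϕ : Tsub, |Lfun ϕ| ≤ Real.sqrt r * ‖qmap ϕ‖ := hLb
  have hker : LinearMap.ker qmap ≤ LinearMap.ker Lfun := by
    intro ϕ hϕ
    rw [LinearMap.mem_ker] at hϕ ⊢
    have h := hbound ϕ
    rw [hϕ, norm_zero, mul_zero] at h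
    exact abs_eq_zero.mp (le_antisymm h (abs_nonneg _))
  set W := LinearMap.range qmap with hW
  set eIso := LinearMap.quotKerEquivRange qmap with heIso
  set Lq := Submodule.liftQ (LinearMap.ker qmap) Lfun hker with hLq
  set L' : W →ₗ[ℝ] ℝ := Lq.comp (eIso.symm.toLinearMap) with hL'
  have hL'q : ∀ ϕ : Tsub, L' ⟨qmap ϕ, LinearMap.mem_range_self _ ϕ⟩ = Lfun ϕ := by
    intro ϕ
    have h1 : eIso (Submodule.Quotient.mk ϕ) = ⟨qmap ϕ, LinearMap.mem_range_self _ ϕ⟩ :=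
      Subtype.ext (LinearMap.quotKerEquivRange_apply_mk qmap ϕ)
    have h2 : eIso.symm ⟨qmap ϕ, LinearMap.mem_range_self _ ϕ⟩ = Submodule.Quotient.mk ϕ := by
      rw [LinearEquiv.symm_apply_eq, h1]
    rw [hL']
    simp only [LinearMap.comp_apply, LinearEquiv.coe_toLinearMap, h2]
    exact Submodule.liftQ_apply _ _ _
  have hL'b : ∀ w : W, ‖L' w‖ ≤ Real.sqrt r * ‖w‖ := by
    rintro ⟨w, hw⟩
    obtain ⟨ϕ, rfl⟩ := hw
    rw [Real.norm_eq_abs]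
    have h1 := hL'q ϕ
    rw [h1]
    exact hbound ϕ
  set L'c := LinearMap.mkContinuous L' (Real.sqrt r) hL'b with hL'c
  obtain ⟨g, hg_ext, hg_norm⟩ := exists_extension_norm_eq W L'c
  have hgnorm : ‖g‖ ≤ Real.sqrt r := by
    rw [hg_norm]
    exact LinearMap.mkContinuous_norm_le _ (Real.sqrt_nonneg r) _
  set v' := (InnerProductSpace.toDual ℝ (Lp (EuclideanSpace ℝ (Fin K)) 2 μ)).symm g with hv'
  have hv'inner : ∀ ϕ : Tsub, ⟪v', qmap ϕ⟫ = Lfun ϕ := by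
    intro ϕ
    rw [hv', InnerProductSpace.toDual_symm_apply]
    have h1 := hg_ext ⟨qmap ϕ, LinearMap.mem_range_self _ ϕ⟩
    rw [h1]
    exact hL'q ϕ
  have hv'norm : ‖v'‖ ≤ Real.sqrt r := by
    rw [hv', LinearIsometryEquiv.norm_map]
    exact hgnorm
  -- conclusion
  refine ⟨v', Lp.memLp v', σ, hσ, ?_, ?_⟩
  · intro ϕ hϕ1 hϕ2 hϕ3
    have hϕT : ϕ ∈ Tsub := ⟨hϕ1, hϕ2, hϕ3⟩
    set ϕT : Tsub := ⟨ϕ, hϕT⟩ with hϕTdef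
    have h2 : ∫ x, ⟪ϕ x, v' x⟫ ∂μ = Lv ϕT := by
      have h3 : ⟪v', qmap ϕT⟫ = Lfun ϕT := hv'inner ϕT
      rw [L2.inner_def] at h3
      have h4 : ∫ x, ⟪(v' : Lp (EuclideanSpace ℝ (Fin K)) 2 μ) x, (qmap ϕT : Lp (EuclideanSpace ℝ (Fin K)) 2 μ) x⟫ ∂μ
          = ∫ x, ⟪ϕ x, (v' : Lp (EuclideanSpace ℝ (Fin K)) 2 μ) x⟫ ∂μ := by
        refine integral_congr_ae ?_
        filter_upwards [(hTmem ϕT μ hμprob).coeFn_toLp] with x hx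
        rw [show ((qmap ϕT : Lp (EuclideanSpace ℝ (Fin K)) 2 μ) : (EuclideanSpace ℝ (Fin K)) → (EuclideanSpace ℝ (Fin K))) x = ϕ x from hx, real_inner_comm]
      rw [h4] at h3
      exact h3
    rw [h2]
    exact hLv ϕT
  · have hA : ∫⁻ x, (‖(v' : Lp (EuclideanSpace ℝ (Fin K)) 2 μ) x‖₊ : ℝ≥0∞) ^ 2 ∂μ ≠ ⊤ :=
      aux_lintegral_ne_top (Lp.memLp v')
    have hl : (atTop.liminf fun j => N (σ j)) ≤ C := by
      refine liminf_le_of_le ?_ ?_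
      · exact isBoundedUnder_of ⟨0, fun j => zero_le⟩
      · intro c hc
        obtain ⟨j, hj⟩ := hc.exists
        exact hj.trans (hC (σ j))
    have hlne : (atTop.liminf fun j => N (σ j)) ≠ ⊤ := ne_top_of_le_ne_top hCne hl
    have hrl : r = (atTop.liminf fun j => N (σ j)).toReal := by
      rw [hrdef, hb]
      exact ENNReal.liminf_toReal_eq hCne (Eventually.of_forall fun j => hC (σ j))
    have h5 : (∫⁻ x, (‖(v' : Lp (EuclideanSpace ℝ (Fin K)) 2 μ) x‖₊ : ℝ≥0∞) ^ 2 ∂μ).toReal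
        = ∫ x, ‖(v' : Lp (EuclideanSpace ℝ (Fin K)) 2 μ) x‖ ^ 2 ∂μ :=
      (aux_integral_sq (Lp.aestronglyMeasurable v')).symm
    have h6 : ∫ x, ‖(v' : Lp (EuclideanSpace ℝ (Fin K)) 2 μ) x‖ ^ 2 ∂μ = ‖v'‖ ^ 2 := (aux_norm_sq_Lp v').symm
    have h7 : ‖v'‖ ^ 2 ≤ r := by
      have := pow_le_pow_left₀ (norm_nonneg v') hv'norm 2
      rwa [Real.sq_sqrt hr0] at this
    refine (ENNReal.toReal_le_toReal hA hlne).mp ?_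
    rw [h5, h6, ← hrl]
    exact h7


end
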